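/- The complement in X₂ of the image of ℝ ∪ {∞} is connected. -/

import Mathlib

/-!
Since the identifications `i ∼ -2i` and `-i ∼ 2i` never involve a point of `ℝ ∪ {∞}`, the
complement of its image is the image of the two open half-planes. Each half-plane maps to a
connected set, and the two images meet because the class of `i` is also the class of `-2i`.
-/

open OnePoint

/-- Identifications `i ∼ −2i` and `−i ∼ 2i` on the Riemann sphere `OnePoint ℂ`. -/
def relEx2₂ : OnePoint ℂ → OnePoint ℂ → Prop := fun a b =>
  (a = (Complex.I : OnePoint ℂ) ∧ b = ((-(2 * Complex.I) : ℂ) : OnePoint ℂ)) ∨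
  (a = ((-Complex.I : ℂ) : OnePoint ℂ) ∧ b = ((2 * Complex.I : ℂ) : OnePoint ℂ))

/-- The subset `ℝ ∪ {∞}` of the Riemann sphere `OnePoint ℂ`. -/
def realCircle : Set (OnePoint ℂ) :=
  {x | (∃ t : ℝ, x = ((t : ℂ) : OnePoint ℂ)) ∨ x = ∞}

theorem Quot.compl_image_mk {α : Type*} {r : α → α → Prop} {s : Set α}
    (hs : ∀ a b, r a b → (a ∈ s ↔ b ∈ s)) :
    (Quot.mk r '' s)ᶜ = Quot.mk r '' sᶜ := by
  let memS : Quot r → Prop := Quot.lift (· ∈ s) fun a b hab => propext (hs a b hab)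
  ext q
  induction q using Quot.ind with | mk a => ?_
  constructor
  · intro ha
    exact ⟨a, fun has => ha ⟨a, has, rfl⟩, rfl⟩
  · rintro ⟨b, hb, hba⟩ ⟨c, hc, hca⟩
    exact hb (cast (congrArg memS (hca.trans hba.symm)) hc)

theorem coe_mem_realCircle_iff (z : ℂ) : (z : OnePoint ℂ) ∈ realCircle ↔ z.im = 0 := by
  simp only [realCircle, Set.mem_ofPred_eq, coe_eq_coe, coe_ne_infty, or_false]
  constructor
  · rintro ⟨t, rfl⟩
    exact Complex.ofReal_im t
  · intro h
    exact ⟨z.re, Complex.ext rfl h⟩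

theorem compl_realCircle : realCircleᶜ = ((↑) : ℂ → OnePoint ℂ) '' {z | z.im ≠ 0} := by
  ext x
  induction x using OnePoint.rec with
  | infty => simp [realCircle]
  | coe z => simp [coe_mem_realCircle_iff]

theorem relEx2₂_mem_realCircle_iff {a b : OnePoint ℂ} (h : relEx2₂ a b) :
    a ∈ realCircle ↔ b ∈ realCircle := by
  rcases h with ⟨rfl, rfl⟩ | ⟨rfl, rfl⟩ <;> simp [coe_mem_realCircle_iff]

/-- the complement in `X₂ = Quot relEx2₂` of the image of `ℝ ∪ {∞}`
is connected. -/
theorem double_cover_statement_11 :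
    IsConnected ((Quot.mk relEx2₂ '' realCircle)ᶜ) := by
  set π : ℂ → Quot relEx2₂ := fun z => Quot.mk relEx2₂ (z : OnePoint ℂ)
  have hπ : Continuous π := continuous_quot_mk.comp continuous_coe
  have h_eq : (Quot.mk relEx2₂ '' realCircle)ᶜ = π '' {z | z.im < 0} ∪ π '' {z | 0 < z.im} := by
    rw [Quot.compl_image_mk fun _ _ => relEx2₂_mem_realCircle_iff, compl_realCircle,
      Set.image_image]
    simp only [ne_iff_lt_or_gt, Set.ofPred_or, Set.image_union]
    rfl
  have h_meet : π (-(2 * Complex.I)) = π Complex.I :=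
    (Quot.sound (r := relEx2₂) (Or.inl ⟨rfl, rfl⟩)).symm
  have h_lower : IsConnected (π '' {z | z.im < 0}) :=
    (convex_halfSpace_im_lt 0).isConnected ⟨-Complex.I, by simp⟩ |>.image _ hπ.continuousOn
  have h_upper : IsConnected (π '' {z | 0 < z.im}) :=
    (convex_halfSpace_im_gt 0).isConnected ⟨Complex.I, by simp⟩ |>.image _ hπ.continuousOn
  rw [h_eq]
  exact h_lower.union ⟨π Complex.I, ⟨_, by simp, h_meet⟩, Complex.I, by simp, rfl⟩ h_upper
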